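/- arXiv:1803.04293 — 4 statements merged into one kernel-verified Lean document; each statement's English description precedes it below -/
import Mathlib

section
/- Let Y be equipped with a norm ‖·‖ such that Y₊ is normal with constant C > 0, and let Z ⊆ Y₊ be a cone such that |φ − ψ| ∈ Z for all φ, ψ ∈ Z and such that ‖φ‖ = ‖|φ|‖ for all φ ∈ Z − Z. If A : Z − Z → Y is subadditive and monotone, AZ ⊆ Z, and A is bounded on Z (i.e. ‖A‖ < ∞), then A is Lipschitz on Z and ‖A‖_LIP ≤ C‖A‖. -/
/-- `Y ⊆ Ω → ℝ` is a linear subspace equipped with a norm `nrm` whose positive cone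
is normal with constant `C > 0`, and `Z ⊆ Y₊` is a cone with `|φ - ψ| ∈ Z` for `φ, ψ ∈ Z` and
`‖φ‖ = ‖|φ|‖` for `φ ∈ Z - Z`.  If `A : Z - Z → Y` is subadditive, monotone, `AZ ⊆ Z` and `A` is
bounded on `Z` (i.e. `‖A‖ = sup {‖Aφ‖/‖φ‖} < ∞`), then `A` is Lipschitz on `Z` with
`‖A‖_LIP ≤ C * ‖A‖`, i.e. `‖Aφ - Aψ‖ ≤ C * ‖A‖ * ‖φ - ψ‖` for all `φ, ψ ∈ Z`. -/
theorem lipschitz_of_bounded_subadditive_monotone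
    {Ω : Type*} [Nonempty Ω]
    (Y : Submodule ℝ (Ω → ℝ))
    -- the norm on `Y`
    (nrm : (Ω → ℝ) → ℝ)
    (hnrm_nonneg : ∀ φ ∈ Y, 0 ≤ nrm φ)
    (hnrm_zero : ∀ φ ∈ Y, (nrm φ = 0 ↔ φ = 0))
    (hnrm_add : ∀ φ ∈ Y, ∀ ψ ∈ Y, nrm (φ + ψ) ≤ nrm φ + nrm ψ)
    (hnrm_smul : ∀ (c : ℝ), ∀ φ ∈ Y, nrm (c • φ) = |c| * nrm φ)
    -- `Y₊` is normal with constant `C > 0`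
    (C : ℝ) (hC : 0 < C)
    (hnormal : ∀ φ ∈ Y, ∀ ψ ∈ Y, 0 ≤ φ → φ ≤ ψ → nrm φ ≤ C * nrm ψ)
    -- `Z ⊆ Y₊` is a cone
    (Z : Set (Ω → ℝ))
    (hZY : ∀ φ ∈ Z, φ ∈ Y ∧ 0 ≤ φ)
    (hZadd : ∀ φ ∈ Z, ∀ ψ ∈ Z, φ + ψ ∈ Z)
    (hZsmul : ∀ t : ℝ, 0 ≤ t → ∀ φ ∈ Z, t • φ ∈ Z)
    (hZabs : ∀ φ ∈ Z, ∀ ψ ∈ Z, |φ - ψ| ∈ Z)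
    -- `‖φ‖ = ‖|φ|‖` for all `φ ∈ Z - Z`
    (hZnrmabs : ∀ χ, (∃ φ ∈ Z, ∃ ψ ∈ Z, χ = φ - ψ) → nrm χ = nrm |χ|)
    -- `A : Z - Z → Y`
    (A : (Ω → ℝ) → (Ω → ℝ))
    (hAY : ∀ χ, (∃ φ ∈ Z, ∃ ψ ∈ Z, χ = φ - ψ) → A χ ∈ Y)
    (hsub : ∀ χ₁ χ₂, (∃ φ ∈ Z, ∃ ψ ∈ Z, χ₁ = φ - ψ) →
      (∃ φ ∈ Z, ∃ ψ ∈ Z, χ₂ = φ - ψ) → A (χ₁ + χ₂) ≤ A χ₁ + A χ₂)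
    (hmono : ∀ χ₁ χ₂, (∃ φ ∈ Z, ∃ ψ ∈ Z, χ₁ = φ - ψ) →
      (∃ φ ∈ Z, ∃ ψ ∈ Z, χ₂ = φ - ψ) → χ₁ ≤ χ₂ → A χ₁ ≤ A χ₂)
    -- `AZ ⊆ Z`
    (hAZ : ∀ φ ∈ Z, A φ ∈ Z)
    -- `A` is bounded on `Z`, i.e. `‖A‖ < ∞`
    (hbdd : BddAbove {r : ℝ | ∃ φ ∈ Z, φ ≠ 0 ∧ r = nrm (A φ) / nrm φ}) :
    ∀ φ ∈ Z, ∀ ψ ∈ Z,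
      nrm (A φ - A ψ) ≤
        C * sSup {r : ℝ | ∃ φ ∈ Z, φ ≠ 0 ∧ r = nrm (A φ) / nrm φ} * nrm (φ - ψ) := by
  intro φ hφ ψ hψ
  set S := {r : ℝ | ∃ φ ∈ Z, φ ≠ 0 ∧ r = nrm (A φ) / nrm φ} with hS
  set M := sSup S with hM
  have h0Z : (0 : Ω → ℝ) ∈ Z := by
    have := hZsmul 0 le_rfl φ hφ
    simpa using this
  have memD : ∀ χ ∈ Z, ∃ a ∈ Z, ∃ b ∈ Z, χ = a - b :=
    fun χ hχ => ⟨χ, hχ, 0, h0Z, (sub_zero χ).symm⟩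
  by_cases hfe : φ = ψ
  · subst hfe
    have hz : nrm (0 : Ω → ℝ) = 0 := (hnrm_zero 0 Y.zero_mem).mpr rfl
    simp [sub_self, hz]
  · -- main case
    have hχZ : |φ - ψ| ∈ Z := hZabs φ hφ ψ hψ
    have hχZ' : |ψ - φ| ∈ Z := hZabs ψ hψ φ hφ
    have habscomm : |ψ - φ| = |φ - ψ| := by
      funext ω; simp [Pi.abs_apply, abs_sub_comm]
    -- A φ - A ψ ≤ A |φ - ψ|
    have key : ∀ a ∈ Z, ∀ b ∈ Z, A a - A b ≤ A |a - b| := by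
      intro a ha b hb
      have habZ : |a - b| ∈ Z := hZabs a ha b hb
      have hle : a ≤ b + |a - b| := by
        intro ω
        simp only [Pi.add_apply, Pi.abs_apply, Pi.sub_apply]
        have := le_abs_self (a ω - b ω)
        linarith
      have h1 : A a ≤ A (b + |a - b|) :=
        hmono a (b + |a - b|) (memD a ha) (memD _ (hZadd b hb _ habZ)) hle
      have h2 : A (b + |a - b|) ≤ A b + A |a - b| :=
        hsub b |a - b| (memD b hb) (memD _ habZ)
      have h3 : A a ≤ A b + A |a - b| := le_trans h1 h2
      intro ω
      have := h3 ω
      simp only [Pi.add_apply, Pi.sub_apply] at this ⊢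
      linarith
    have habs : |A φ - A ψ| ≤ A |φ - ψ| := by
      intro ω
      have h1 := key φ hφ ψ hψ ω
      have h2 := key ψ hψ φ hφ ω
      rw [habscomm] at h2
      simp only [Pi.abs_apply, Pi.sub_apply] at h1 h2 ⊢
      rw [abs_le]
      constructor <;> linarith
    have habsZ : |A φ - A ψ| ∈ Z := hZabs _ (hAZ φ hφ) _ (hAZ ψ hψ)
    have hAχZ : A |φ - ψ| ∈ Z := hAZ _ hχZ
    have step1 : nrm (A φ - A ψ) = nrm |A φ - A ψ| :=
      hZnrmabs _ ⟨A φ, hAZ φ hφ, A ψ, hAZ ψ hψ, rfl⟩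
    have step2 : nrm |A φ - A ψ| ≤ C * nrm (A |φ - ψ|) :=
      hnormal _ (hZY _ habsZ).1 _ (hZY _ hAχZ).1 (hZY _ habsZ).2 habs
    -- bound nrm (A |φ-ψ|) by M * nrm |φ-ψ|
    have hχne : |φ - ψ| ≠ 0 := by
      intro h
      apply hfe
      funext ω
      have := congrFun h ω
      simp only [Pi.abs_apply, Pi.sub_apply, Pi.zero_apply, abs_eq_zero] at this
      linarith
    have hχpos : 0 < nrm |φ - ψ| := by
      rcases lt_or_eq_of_le (hnrm_nonneg _ (hZY _ hχZ).1) with h | h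
      · exact h
      · exact absurd ((hnrm_zero _ (hZY _ hχZ).1).mp h.symm) hχne
    have hrS : nrm (A |φ - ψ|) / nrm |φ - ψ| ∈ S := ⟨|φ - ψ|, hχZ, hχne, rfl⟩
    have hrM : nrm (A |φ - ψ|) / nrm |φ - ψ| ≤ M := le_csSup hbdd hrS
    have step3 : nrm (A |φ - ψ|) ≤ M * nrm |φ - ψ| := (div_le_iff₀ hχpos).mp hrM
    have step4 : nrm (φ - ψ) = nrm |φ - ψ| := hZnrmabs _ ⟨φ, hφ, ψ, hψ, rfl⟩
    calc nrm (A φ - A ψ) = nrm |A φ - A ψ| := step1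
      _ ≤ C * nrm (A |φ - ψ|) := step2
      _ ≤ C * (M * nrm |φ - ψ|) := by
          exact mul_le_mul_of_nonneg_left step3 hC.le
      _ = C * M * nrm (φ - ψ) := by rw [step4]; ring
end

section
/- (Uniform boundedness principle.) Let Y be equipped with a norm ‖·‖ such that Y₊ is normal with constant C > 0, and let Z ⊆ Y₊ be a cone that is a complete metric space in the metric induced by the norm of Y, such that |φ − ψ| ∈ Z for all φ, ψ ∈ Z and ‖φ‖ = ‖|φ|‖ for all φ ∈ Z − Z. Let 𝒜 be a set of subadditive and monotone mappings A : Z − Z → Y such that AZ ⊆ Z and such that each A ∈ 𝒜 is positively homogeneous on Z and continuous on Z. If for each φ ∈ Z there exists M_φ > 0 such that ‖Aφ‖ ≤ M_φ for all A ∈ 𝒜, then there exists M > 0 such that ‖A‖_LIP ≤ M for all A ∈ 𝒜. -/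
/-!
By Baire's theorem, one of the closed sets `{φ ∈ Z : ‖A φ‖ ≤ n for all A ∈ 𝒜}`, which cover
the complete space `Z`, contains a ball `‖ψ - φ₀‖ < r`. For `χ ∈ Z` and `t ‖χ‖ < r` the point
`φ₀ + t χ` lies in that ball, and `0 ≤ A (t χ) ≤ A (φ₀ + t χ)`, so homogeneity and normality give
`t ‖A χ‖ ≤ C M`, i.e. the uniform linear bound `‖A χ‖ ≤ (C M / r) ‖χ‖`. Subadditivity and
monotonicity give `|A φ - A ψ| ≤ A |φ - ψ|`, and normality turns the linear bound into a
Lipschitz bound.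
-/

open Set Filter Topology

theorem abs_apply_sub_apply_le_apply_abs_sub {E F : Type*} [AddCommGroup E] [Lattice E]
    [IsOrderedAddMonoid E] [AddCommGroup F] [Lattice F] [IsOrderedAddMonoid F]
    {Z : Set E} {A : E → F} (hmono : MonotoneOn A Z)
    (hsub : ∀ φ ∈ Z, ∀ ψ ∈ Z, A (φ + ψ) ≤ A φ + A ψ) (hZadd : ∀ φ ∈ Z, ∀ ψ ∈ Z, φ + ψ ∈ Z)
    (hZabs : ∀ φ ∈ Z, ∀ ψ ∈ Z, |φ - ψ| ∈ Z) {φ ψ : E} (hφ : φ ∈ Z) (hψ : ψ ∈ Z) :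
    |A φ - A ψ| ≤ A |φ - ψ| := by
  have habs := hZabs φ hφ ψ hψ
  have h₁ : A φ ≤ A ψ + A |φ - ψ| :=
    (hmono hφ (hZadd ψ hψ _ habs) (sub_le_iff_le_add'.1 (le_abs_self _))).trans
      (hsub ψ hψ _ habs)
  have h₂ : A ψ ≤ A φ + A |φ - ψ| :=
    (hmono hψ (hZadd φ hφ _ habs)
      (sub_le_iff_le_add'.1 (abs_sub_comm φ ψ ▸ le_abs_self _))).trans (hsub φ hφ _ habs)
  exact abs_le'.2 ⟨sub_le_iff_le_add'.2 h₁, neg_sub (A φ) (A ψ) ▸ sub_le_iff_le_add'.2 h₂⟩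

theorem le_mul_of_forall_pos_le_mul_add {a K s : ℝ} (h : ∀ ε > 0, a ≤ K * (s + ε)) :
    a ≤ K * s := by
  have hlim : Tendsto (fun ε => K * (s + ε)) (𝓝[>] 0) (𝓝 (K * s)) := by
    have hcont : Continuous fun ε : ℝ => K * (s + ε) := by fun_prop
    simpa using (hcont.tendsto 0).mono_left nhdsWithin_le_nhds
  exact ge_of_tendsto hlim (eventually_nhdsWithin_of_forall h)

theorem exists_ball_forall_le_of_forall_bddAbove {X ι : Type*} [PseudoMetricSpace X]
    [BaireSpace X] [Nonempty X] {f : ι → X → ℝ} (hf : ∀ i, Continuous (f i))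
    (hbdd : ∀ x, BddAbove (range fun i => f i x)) :
    ∃ x₀, ∃ r > 0, ∃ M > 0, ∀ x, dist x x₀ < r → ∀ i, f i x ≤ M := by
  let S : ℕ → Set X := fun n => {x | ∀ i, f i x ≤ n}
  have hS : ∀ n, IsClosed (S n) := fun n => by
    simpa only [S, ofPred_forall] using
      isClosed_iInter fun i => isClosed_le (hf i) continuous_const
  have hcover : ⋃ n, S n = univ := by
    refine eq_univ_of_forall fun x => ?_
    obtain ⟨M, hM⟩ := hbdd x
    obtain ⟨n, hn⟩ := exists_nat_ge M
    exact mem_iUnion.2 ⟨n, fun i => (hM ⟨i, rfl⟩).trans hn⟩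
  obtain ⟨n, x₀, hx₀⟩ := nonempty_interior_of_iUnion_of_closed hS hcover
  obtain ⟨r, hr, hball⟩ := Metric.isOpen_iff.1 isOpen_interior x₀ hx₀
  refine ⟨x₀, r, hr, n + 1, n.cast_add_one_pos, fun x hx i => ?_⟩
  have := interior_subset (hball hx) i
  linarith

structure IsSeminormOn {E : Type*} [AddCommGroup E] [Module ℝ E] (Y : Submodule ℝ E)
    (nrm : E → ℝ) : Prop where
  add_le : ∀ φ ∈ Y, ∀ ψ ∈ Y, nrm (φ + ψ) ≤ nrm φ + nrm ψ
  smul_eq : ∀ c : ℝ, ∀ φ ∈ Y, nrm (c • φ) = |c| * nrm φ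

namespace IsSeminormOn

variable {E : Type*} [AddCommGroup E] [Module ℝ E] {Y : Submodule ℝ E} {nrm : E → ℝ}

theorem map_zero (h : IsSeminormOn Y nrm) : nrm 0 = 0 := by
  simpa using h.smul_eq 0 0 Y.zero_mem

theorem sub_comm (h : IsSeminormOn Y nrm) {φ ψ : E} (hφ : φ ∈ Y) (hψ : ψ ∈ Y) :
    nrm (φ - ψ) = nrm (ψ - φ) := by
  simpa using (h.smul_eq (-1) (φ - ψ) (Y.sub_mem hφ hψ)).symm

theorem sub_le (h : IsSeminormOn Y nrm) {φ ψ χ : E} (hφ : φ ∈ Y) (hψ : ψ ∈ Y) (hχ : χ ∈ Y) :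
    nrm (φ - χ) ≤ nrm (φ - ψ) + nrm (ψ - χ) := by
  simpa using h.add_le _ (Y.sub_mem hφ hψ) _ (Y.sub_mem hψ hχ)

theorem nonneg (h : IsSeminormOn Y nrm) {φ : E} (hφ : φ ∈ Y) : 0 ≤ nrm φ := by
  have := h.sub_le hφ Y.zero_mem hφ
  rw [sub_self, h.map_zero, ← h.sub_comm hφ Y.zero_mem, sub_zero] at this
  linarith

theorem abs_sub_le (h : IsSeminormOn Y nrm) {φ ψ : E} (hφ : φ ∈ Y) (hψ : ψ ∈ Y) :
    |nrm φ - nrm ψ| ≤ nrm (φ - ψ) := by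
  have h₁ := h.sub_le hφ hψ Y.zero_mem
  have h₂ := h.sub_le hψ hφ Y.zero_mem
  rw [sub_zero, sub_zero] at h₁ h₂
  rw [h.sub_comm hψ hφ] at h₂
  exact abs_sub_le_iff.2 ⟨by linarith, by linarith⟩

abbrev pseudoMetricSpace (h : IsSeminormOn Y nrm) {Z : Set E} (hZY : Z ⊆ Y) :
    PseudoMetricSpace Z where
  dist φ ψ := nrm (φ - ψ)
  dist_self φ := by simpa using h.map_zero
  dist_comm φ ψ := h.sub_comm (hZY φ.2) (hZY ψ.2)
  dist_triangle φ ψ χ := h.sub_le (hZY φ.2) (hZY ψ.2) (hZY χ.2)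

theorem exists_ball_forall_le (h : IsSeminormOn Y nrm) {Z : Set E} (hZY : Z ⊆ Y)
    (hZ : Z.Nonempty)
    (hZcomplete : ∀ u : ℕ → E, (∀ n, u n ∈ Z) →
      (∀ ε : ℝ, 0 < ε → ∃ N : ℕ, ∀ m ≥ N, ∀ n ≥ N, nrm (u m - u n) < ε) →
      ∃ φ ∈ Z, ∀ ε : ℝ, 0 < ε → ∃ N : ℕ, ∀ n ≥ N, nrm (u n - φ) < ε)
    {ι : Type*} {f : ι → E → ℝ}
    (hf : ∀ i, ∀ φ ∈ Z, ∀ ε > 0, ∃ δ > 0, ∀ ψ ∈ Z, nrm (ψ - φ) < δ → |f i ψ - f i φ| < ε)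
    (hbdd : ∀ φ ∈ Z, BddAbove (range fun i => f i φ)) :
    ∃ φ₀ ∈ Z, ∃ r > 0, ∃ M > 0, ∀ ψ ∈ Z, nrm (ψ - φ₀) < r → ∀ i, f i ψ ≤ M := by
  let := h.pseudoMetricSpace hZY
  have : Nonempty Z := hZ.to_subtype
  have : CompleteSpace Z := Metric.complete_of_cauchySeq_tendsto fun u hu => by
    obtain ⟨φ, hφ, hlim⟩ :=
      hZcomplete (fun n => u n) (fun n => (u n).2) (Metric.cauchySeq_iff.1 hu)
    exact ⟨⟨φ, hφ⟩, Metric.tendsto_atTop.2 hlim⟩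
  obtain ⟨φ₀, r, hr, M, hM, hball⟩ := exists_ball_forall_le_of_forall_bddAbove
    (f := fun i (φ : Z) => f i φ)
    (fun i => Metric.continuous_iff.2 fun φ ε hε => (hf i φ φ.2 ε hε).imp fun _ hδ =>
      ⟨hδ.1, fun ψ hψ => hδ.2 ψ ψ.2 hψ⟩)
    (fun φ => hbdd φ φ.2)
  exact ⟨φ₀, φ₀.2, r, hr, M, hM, fun ψ hψ hdist => hball ⟨ψ, hψ⟩ hdist⟩

end IsSeminormOn

section Operator

variable {E : Type*} [AddCommGroup E] [Lattice E] [IsOrderedAddMonoid E] [Module ℝ E]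
  {Y : Submodule ℝ E} {nrm : E → ℝ} {C : ℝ} {Z : Set E} {A : E → E}

theorem nrm_apply_le_mul_nrm_of_le_on_ball (h : IsSeminormOn Y nrm) (hC : 0 ≤ C)
    (hnormal : ∀ φ ∈ Y, ∀ ψ ∈ Y, 0 ≤ φ → φ ≤ ψ → nrm φ ≤ C * nrm ψ)
    (hZY : Z ⊆ Y) (hZnonneg : ∀ φ ∈ Z, 0 ≤ φ) (hZadd : ∀ φ ∈ Z, ∀ ψ ∈ Z, φ + ψ ∈ Z)
    (hZsmul : ∀ t : ℝ, 0 ≤ t → ∀ φ ∈ Z, t • φ ∈ Z)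
    (hmono : MonotoneOn A Z) (hAZ : MapsTo A Z Z)
    (hhom : ∀ t : ℝ, 0 ≤ t → ∀ φ ∈ Z, A (t • φ) = t • A φ)
    {φ₀ : E} (hφ₀ : φ₀ ∈ Z) {r M : ℝ} (hr : 0 < r)
    (hball : ∀ ψ ∈ Z, nrm (ψ - φ₀) < r → nrm (A ψ) ≤ M) {χ : E} (hχ : χ ∈ Z) :
    nrm (A χ) ≤ C * M / r * nrm χ := by
  refine le_mul_of_forall_pos_le_mul_add fun ε hε => ?_
  have hs := h.nonneg (hZY hχ)
  set t := r / (nrm χ + ε) with ht_def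
  have ht : 0 < t := by positivity
  have htχ : t • χ ∈ Z := hZsmul t ht.le χ hχ
  have hshift : φ₀ + t • χ ∈ Z := hZadd _ hφ₀ _ htχ
  have hnear : nrm (φ₀ + t • χ - φ₀) < r := by
    rw [add_sub_cancel_left, h.smul_eq t χ (hZY hχ), abs_of_pos ht, ht_def,
      div_mul_eq_mul_div, div_lt_iff₀ (by positivity)]
    nlinarith
  have hle : A (t • χ) ≤ A (φ₀ + t • χ) :=
    hmono htχ hshift (le_add_of_nonneg_left (hZnonneg φ₀ hφ₀))
  have key : t * nrm (A χ) ≤ C * M := calc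
    t * nrm (A χ) = nrm (A (t • χ)) := by
      rw [hhom t ht.le χ hχ, h.smul_eq t _ (hZY (hAZ hχ)), abs_of_pos ht]
    _ ≤ C * nrm (A (φ₀ + t • χ)) :=
      hnormal _ (hZY (hAZ htχ)) _ (hZY (hAZ hshift)) (hZnonneg _ (hAZ htχ)) hle
    _ ≤ C * M := mul_le_mul_of_nonneg_left (hball _ hshift hnear) hC
  calc nrm (A χ) ≤ C * M / t := (le_div_iff₀' ht).2 key
    _ = C * M / r * (nrm χ + ε) := by rw [ht_def]; field_simp

theorem nrm_apply_sub_apply_le_of_nrm_apply_le (hC : 0 ≤ C)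
    (hnormal : ∀ φ ∈ Y, ∀ ψ ∈ Y, 0 ≤ φ → φ ≤ ψ → nrm φ ≤ C * nrm ψ)
    (hZY : Z ⊆ Y) (hZadd : ∀ φ ∈ Z, ∀ ψ ∈ Z, φ + ψ ∈ Z)
    (hZabs : ∀ φ ∈ Z, ∀ ψ ∈ Z, |φ - ψ| ∈ Z)
    (hZnrmabs : ∀ φ ∈ Z, ∀ ψ ∈ Z, nrm (φ - ψ) = nrm |φ - ψ|)
    (hmono : MonotoneOn A Z) (hsub : ∀ φ ∈ Z, ∀ ψ ∈ Z, A (φ + ψ) ≤ A φ + A ψ)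
    (hAZ : MapsTo A Z Z) {K : ℝ} (hbound : ∀ χ ∈ Z, nrm (A χ) ≤ K * nrm χ)
    {φ ψ : E} (hφ : φ ∈ Z) (hψ : ψ ∈ Z) :
    nrm (A φ - A ψ) ≤ C * K * nrm (φ - ψ) := by
  have habs := hZabs φ hφ ψ hψ
  calc nrm (A φ - A ψ) = nrm |A φ - A ψ| := hZnrmabs _ (hAZ hφ) _ (hAZ hψ)
    _ ≤ C * nrm (A |φ - ψ|) :=
      hnormal _ (hZY (hZabs _ (hAZ hφ) _ (hAZ hψ))) _ (hZY (hAZ habs)) (abs_nonneg _)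
        (abs_apply_sub_apply_le_apply_abs_sub hmono hsub hZadd hZabs hφ hψ)
    _ ≤ C * (K * nrm |φ - ψ|) := mul_le_mul_of_nonneg_left (hbound _ habs) hC
    _ = C * K * nrm (φ - ψ) := by rw [hZnrmabs φ hφ ψ hψ, mul_assoc]

end Operator

theorem uniform_boundedness_principle_general
    {Ω : Type*}
    (Y : Submodule ℝ (Ω → ℝ))
    -- the norm on `Y`
    (nrm : (Ω → ℝ) → ℝ)
    (hnrm_add : ∀ φ ∈ Y, ∀ ψ ∈ Y, nrm (φ + ψ) ≤ nrm φ + nrm ψ)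
    (hnrm_smul : ∀ (c : ℝ), ∀ φ ∈ Y, nrm (c • φ) = |c| * nrm φ)
    -- `Y₊` is normal with constant `C > 0`
    (C : ℝ) (hC : 0 < C)
    (hnormal : ∀ φ ∈ Y, ∀ ψ ∈ Y, 0 ≤ φ → φ ≤ ψ → nrm φ ≤ C * nrm ψ)
    -- `Z ⊆ Y₊` is a cone
    (Z : Set (Ω → ℝ))
    (hZY : ∀ φ ∈ Z, φ ∈ Y ∧ 0 ≤ φ)
    (hZadd : ∀ φ ∈ Z, ∀ ψ ∈ Z, φ + ψ ∈ Z)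
    (hZsmul : ∀ t : ℝ, 0 ≤ t → ∀ φ ∈ Z, t • φ ∈ Z)
    (hZabs : ∀ φ ∈ Z, ∀ ψ ∈ Z, |φ - ψ| ∈ Z)
    -- `‖φ‖ = ‖|φ|‖` for all `φ ∈ Z - Z`
    (hZnrmabs : ∀ χ, (∃ φ ∈ Z, ∃ ψ ∈ Z, χ = φ - ψ) → nrm χ = nrm |χ|)
    -- `Z` is a complete metric space in the metric induced by the norm of `Y`
    (hZcomplete : ∀ u : ℕ → (Ω → ℝ), (∀ n, u n ∈ Z) →
      (∀ ε : ℝ, 0 < ε → ∃ N : ℕ, ∀ m ≥ N, ∀ n ≥ N, nrm (u m - u n) < ε) →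
      ∃ φ ∈ Z, ∀ ε : ℝ, 0 < ε → ∃ N : ℕ, ∀ n ≥ N, nrm (u n - φ) < ε)
    -- `𝒜` is a set of mappings `A : Z - Z → Y`, each subadditive, monotone, with `AZ ⊆ Z`,
    -- positively homogeneous on `Z` and continuous on `Z`
    (𝒜 : Set ((Ω → ℝ) → (Ω → ℝ)))
    (hsub : ∀ A ∈ 𝒜, ∀ χ₁ χ₂, (∃ φ ∈ Z, ∃ ψ ∈ Z, χ₁ = φ - ψ) →
      (∃ φ ∈ Z, ∃ ψ ∈ Z, χ₂ = φ - ψ) → A (χ₁ + χ₂) ≤ A χ₁ + A χ₂)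
    (hmono : ∀ A ∈ 𝒜, ∀ χ₁ χ₂, (∃ φ ∈ Z, ∃ ψ ∈ Z, χ₁ = φ - ψ) →
      (∃ φ ∈ Z, ∃ ψ ∈ Z, χ₂ = φ - ψ) → χ₁ ≤ χ₂ → A χ₁ ≤ A χ₂)
    (hAZ : ∀ A ∈ 𝒜, ∀ φ ∈ Z, A φ ∈ Z)
    (hhom : ∀ A ∈ 𝒜, ∀ t : ℝ, 0 ≤ t → ∀ φ ∈ Z, A (t • φ) = t • A φ)
    (hcont : ∀ A ∈ 𝒜, ∀ φ ∈ Z, ∀ ε : ℝ, 0 < ε → ∃ δ : ℝ, 0 < δ ∧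
      ∀ ψ ∈ Z, nrm (ψ - φ) < δ → nrm (A ψ - A φ) < ε)
    -- pointwise boundedness of `𝒜`
    (hptwise : ∀ φ ∈ Z, ∃ Mφ : ℝ, 0 < Mφ ∧ ∀ A ∈ 𝒜, nrm (A φ) ≤ Mφ) :
    ∃ M : ℝ, 0 < M ∧ ∀ A ∈ 𝒜, ∀ φ ∈ Z, ∀ ψ ∈ Z, nrm (A φ - A ψ) ≤ M * nrm (φ - ψ) := by
  rcases Z.eq_empty_or_nonempty with rfl | ⟨φs, hφs⟩
  · exact ⟨1, one_pos, by simp⟩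
  have h0 : (0 : Ω → ℝ) ∈ Z := by simpa using hZsmul 0 le_rfl φs hφs
  have hdiff : ∀ φ ∈ Z, ∃ a ∈ Z, ∃ b ∈ Z, φ = a - b :=
    fun φ hφ => ⟨φ, hφ, 0, h0, (sub_zero φ).symm⟩
  have hnrm : IsSeminormOn Y nrm := ⟨hnrm_add, hnrm_smul⟩
  have hZY' : Z ⊆ Y := fun φ hφ => (hZY φ hφ).1
  have hcont' : ∀ A ∈ 𝒜, ∀ φ ∈ Z, ∀ ε > 0, ∃ δ > 0, ∀ ψ ∈ Z, nrm (ψ - φ) < δ →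
      |nrm (A ψ) - nrm (A φ)| < ε := fun A hA φ hφ ε hε =>
    (hcont A hA φ hφ ε hε).imp fun _ ⟨hδ, hAδ⟩ => ⟨hδ, fun ψ hψ hψφ =>
      (hnrm.abs_sub_le (hZY' (hAZ A hA ψ hψ)) (hZY' (hAZ A hA φ hφ))).trans_lt (hAδ ψ hψ hψφ)⟩
  have hbdd : ∀ φ ∈ Z, BddAbove (range fun A : 𝒜 => nrm (A.1 φ)) := fun φ hφ =>
    let ⟨Mφ, _, hMφ⟩ := hptwise φ hφ
    ⟨Mφ, by rintro _ ⟨A, rfl⟩; exact hMφ A A.2⟩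
  obtain ⟨φ₀, hφ₀, r, hr, M, hM, hball⟩ := hnrm.exists_ball_forall_le hZY' ⟨φs, hφs⟩ hZcomplete
    (fun A => hcont' A.1 A.2) hbdd
  refine ⟨C * (C * M / r), by positivity, fun A hA φ hφ ψ hψ => ?_⟩
  have hmonoA : MonotoneOn A Z := fun a ha b hb => hmono A hA a b (hdiff a ha) (hdiff b hb)
  have hAZA : MapsTo A Z Z := hAZ A hA
  have hlinear : ∀ χ ∈ Z, nrm (A χ) ≤ C * M / r * nrm χ := fun χ hχ =>
    nrm_apply_le_mul_nrm_of_le_on_ball hnrm hC.le hnormal hZY' (fun φ hφ => (hZY φ hφ).2)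
      hZadd hZsmul hmonoA hAZA (hhom A hA) hφ₀ hr (fun ψ hψ hd => hball ψ hψ hd ⟨A, hA⟩) hχ
  exact nrm_apply_sub_apply_le_of_nrm_apply_le hC.le hnormal hZY' hZadd hZabs
    (fun φ hφ ψ hψ => hZnrmabs _ ⟨φ, hφ, ψ, hψ, rfl⟩) hmonoA
    (fun φ hφ ψ hψ => hsub A hA φ ψ (hdiff φ hφ) (hdiff ψ hψ)) hAZA hlinear hφ hψ

/-- Uniform boundedness principle: Let `Y ⊆ Ω → ℝ` be a linear subspace equipped
with a norm `nrm` whose positive cone is normal with constant `C > 0`, and let `Z ⊆ Y₊` be a cone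
which is complete in the metric induced by the norm, with `|φ - ψ| ∈ Z` for `φ, ψ ∈ Z` and
`‖φ‖ = ‖|φ|‖` for `φ ∈ Z - Z`.  Let `𝒜` be a set of subadditive, monotone mappings
`A : Z - Z → Y` with `AZ ⊆ Z`, each positively homogeneous and continuous on `Z`.  If for each
`φ ∈ Z` there is `M_φ > 0` with `‖Aφ‖ ≤ M_φ` for all `A ∈ 𝒜`, then there is `M > 0` with
`‖A‖_LIP ≤ M` for all `A ∈ 𝒜`, i.e. `‖Aφ - Aψ‖ ≤ M * ‖φ - ψ‖` for all `φ, ψ ∈ Z`, `A ∈ 𝒜`. -/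
theorem uniform_boundedness_principle
    {Ω : Type*} [Nonempty Ω]
    (Y : Submodule ℝ (Ω → ℝ))
    -- the norm on `Y`
    (nrm : (Ω → ℝ) → ℝ)
    (hnrm_nonneg : ∀ φ ∈ Y, 0 ≤ nrm φ)
    (hnrm_zero : ∀ φ ∈ Y, (nrm φ = 0 ↔ φ = 0))
    (hnrm_add : ∀ φ ∈ Y, ∀ ψ ∈ Y, nrm (φ + ψ) ≤ nrm φ + nrm ψ)
    (hnrm_smul : ∀ (c : ℝ), ∀ φ ∈ Y, nrm (c • φ) = |c| * nrm φ)
    -- `Y₊` is normal with constant `C > 0`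
    (C : ℝ) (hC : 0 < C)
    (hnormal : ∀ φ ∈ Y, ∀ ψ ∈ Y, 0 ≤ φ → φ ≤ ψ → nrm φ ≤ C * nrm ψ)
    -- `Z ⊆ Y₊` is a cone
    (Z : Set (Ω → ℝ))
    (hZY : ∀ φ ∈ Z, φ ∈ Y ∧ 0 ≤ φ)
    (hZadd : ∀ φ ∈ Z, ∀ ψ ∈ Z, φ + ψ ∈ Z)
    (hZsmul : ∀ t : ℝ, 0 ≤ t → ∀ φ ∈ Z, t • φ ∈ Z)
    (hZabs : ∀ φ ∈ Z, ∀ ψ ∈ Z, |φ - ψ| ∈ Z)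
    -- `‖φ‖ = ‖|φ|‖` for all `φ ∈ Z - Z`
    (hZnrmabs : ∀ χ, (∃ φ ∈ Z, ∃ ψ ∈ Z, χ = φ - ψ) → nrm χ = nrm |χ|)
    -- `Z` is a complete metric space in the metric induced by the norm of `Y`
    (hZcomplete : ∀ u : ℕ → (Ω → ℝ), (∀ n, u n ∈ Z) →
      (∀ ε : ℝ, 0 < ε → ∃ N : ℕ, ∀ m ≥ N, ∀ n ≥ N, nrm (u m - u n) < ε) →
      ∃ φ ∈ Z, ∀ ε : ℝ, 0 < ε → ∃ N : ℕ, ∀ n ≥ N, nrm (u n - φ) < ε)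
    -- `𝒜` is a set of mappings `A : Z - Z → Y`, each subadditive, monotone, with `AZ ⊆ Z`,
    -- positively homogeneous on `Z` and continuous on `Z`
    (𝒜 : Set ((Ω → ℝ) → (Ω → ℝ)))
    (hAY : ∀ A ∈ 𝒜, ∀ χ, (∃ φ ∈ Z, ∃ ψ ∈ Z, χ = φ - ψ) → A χ ∈ Y)
    (hsub : ∀ A ∈ 𝒜, ∀ χ₁ χ₂, (∃ φ ∈ Z, ∃ ψ ∈ Z, χ₁ = φ - ψ) →
      (∃ φ ∈ Z, ∃ ψ ∈ Z, χ₂ = φ - ψ) → A (χ₁ + χ₂) ≤ A χ₁ + A χ₂)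
    (hmono : ∀ A ∈ 𝒜, ∀ χ₁ χ₂, (∃ φ ∈ Z, ∃ ψ ∈ Z, χ₁ = φ - ψ) →
      (∃ φ ∈ Z, ∃ ψ ∈ Z, χ₂ = φ - ψ) → χ₁ ≤ χ₂ → A χ₁ ≤ A χ₂)
    (hAZ : ∀ A ∈ 𝒜, ∀ φ ∈ Z, A φ ∈ Z)
    (hhom : ∀ A ∈ 𝒜, ∀ t : ℝ, 0 ≤ t → ∀ φ ∈ Z, A (t • φ) = t • A φ)
    (hcont : ∀ A ∈ 𝒜, ∀ φ ∈ Z, ∀ ε : ℝ, 0 < ε → ∃ δ : ℝ, 0 < δ ∧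
      ∀ ψ ∈ Z, nrm (ψ - φ) < δ → nrm (A ψ - A φ) < ε)
    -- pointwise boundedness of `𝒜`
    (hptwise : ∀ φ ∈ Z, ∃ Mφ : ℝ, 0 < Mφ ∧ ∀ A ∈ 𝒜, nrm (A φ) ≤ Mφ) :
    ∃ M : ℝ, 0 < M ∧ ∀ A ∈ 𝒜, ∀ φ ∈ Z, ∀ ψ ∈ Z, nrm (A φ - A ψ) ≤ M * nrm (φ - ψ) :=
  uniform_boundedness_principle_general Y nrm hnrm_add hnrm_smul C hC hnormal Z hZY hZadd hZsmul
    hZabs hZnrmabs hZcomplete 𝒜 hsub hmono hAZ hhom hcont hptwise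
end

section
/- For the max-type kernel operator A restricted to the cone Z = C₊[0,a], one has ‖A‖_LIP = ‖A‖ = max{k(s,t) : (s,t) ∈ S}, where ‖A‖ = sup{‖Aφ‖_∞/‖φ‖_∞ : φ ∈ Z, φ ≠ 0} and ‖A‖_LIP = sup{‖Aφ − Aψ‖_∞/‖φ − ψ‖_∞ : φ, ψ ∈ Z, φ ≠ ψ}. -/
/-!
Each value `(Aφ)(s)` is attained as `k(s,t) φ(t)` at some `t`, and testing `Aψ` at the same
`t` gives `(Aφ)(s) - (Aψ)(s) ≤ k(s,t) (φ(t) - ψ(t)) ≤ K ‖φ - ψ‖`, where `K` is the maximum of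
`k` on the compact set `S`. Since `A 0 = 0`, both ratios are bounded by `K`, and `φ = 1` attains it:
`(A 1)(s) = max_t k(s,t)`, whose maximum over `s` is `K`.
-/

open Set

theorem isClosed_setOf_snd_mem_Icc {X Y : Type*} [TopologicalSpace X] [TopologicalSpace Y]
    [Preorder Y] [OrderClosedTopology Y] {f g : X → Y} (hf : Continuous f) (hg : Continuous g) :
    IsClosed {p : X × Y | p.2 ∈ Icc (f p.1) (g p.1)} :=
  (isClosed_le (hf.comp continuous_fst) continuous_snd).inter
    (isClosed_le continuous_snd (hg.comp continuous_fst))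

theorem IsGreatest.le_add_mul_of_abs_sub_le {ι : Type*} {I : Set ι} {w f g : ι → ℝ}
    {x y K d : ℝ} (hw : ∀ t ∈ I, 0 ≤ w t ∧ w t ≤ K) (hfg : ∀ t ∈ I, |f t - g t| ≤ d)
    (hx : IsGreatest ((fun t => w t * f t) '' I) x)
    (hy : IsGreatest ((fun t => w t * g t) '' I) y) :
    x ≤ y + K * d := by
  obtain ⟨t, ht, rfl⟩ := hx.1
  have hgy : w t * g t ≤ y := hy.2 ⟨t, ht, rfl⟩
  have hd : 0 ≤ d := (abs_nonneg _).trans (hfg t ht)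
  calc w t * f t = w t * g t + w t * (f t - g t) := by ring
    _ ≤ y + w t * d :=
      add_le_add hgy (mul_le_mul_of_nonneg_left ((le_abs_self _).trans (hfg t ht)) (hw t ht).1)
    _ ≤ y + K * d := by gcongr; exact (hw t ht).2

section MaxKernel

variable {X Y : Type*} [TopologicalSpace X] [TopologicalSpace Y] {I : X → Set Y}
  {k : X → Y → ℝ} {A : C(Y, ℝ) → C(X, ℝ)}

theorem maxKernel_zero (hA : ∀ φ s, IsGreatest ((fun t => k s t * φ t) '' I s) (A φ s)) :
    A 0 = 0 := by
  ext s
  obtain ⟨t, -, ht⟩ := (hA 0 s).1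
  simp [← ht]

theorem norm_maxKernel_sub_le [CompactSpace X] [CompactSpace Y] [Nonempty X]
    (hA : ∀ φ s, IsGreatest ((fun t => k s t * φ t) '' I s) (A φ s))
    {K : ℝ} (hk : ∀ s, ∀ t ∈ I s, 0 ≤ k s t ∧ k s t ≤ K) (φ ψ : C(Y, ℝ)) :
    ‖A φ - A ψ‖ ≤ K * ‖φ - ψ‖ := by
  have hdist (φ ψ : C(Y, ℝ)) : ∀ t, |φ t - ψ t| ≤ ‖φ - ψ‖ := fun t =>
    (φ - ψ).norm_coe_le_norm t
  refine (ContinuousMap.norm_le_of_nonempty _).2 fun s => abs_sub_le_iff.2 ⟨?_, ?_⟩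
  · have := (hA φ s).le_add_mul_of_abs_sub_le (hk s) (fun t _ => hdist φ ψ t) (hA ψ s)
    linarith
  · have := (hA ψ s).le_add_mul_of_abs_sub_le (hk s) (fun t _ => hdist ψ φ t) (hA φ s)
    rw [norm_sub_rev] at this
    linarith

theorem norm_maxKernel_one [CompactSpace X] [CompactSpace Y]
    (hA : ∀ φ s, IsGreatest ((fun t => k s t * φ t) '' I s) (A φ s))
    {K : ℝ} (hk : ∀ s, ∀ t ∈ I s, 0 ≤ k s t ∧ k s t ≤ K)
    {s₀ : X} {t₀ : Y} (ht₀ : t₀ ∈ I s₀) (hK : k s₀ t₀ = K) :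
    ‖A 1‖ = K := by
  have : Nonempty X := ⟨s₀⟩
  have hK0 : 0 ≤ K := hK ▸ (hk s₀ t₀ ht₀).1
  apply le_antisymm
  · calc ‖A 1‖ = ‖A 1 - A 0‖ := by rw [maxKernel_zero hA, sub_zero]
      _ ≤ K * ‖(1 : C(Y, ℝ)) - 0‖ := norm_maxKernel_sub_le hA hk 1 0
      _ ≤ K * 1 := by
        gcongr
        exact (ContinuousMap.norm_le _ zero_le_one).2 fun _ => by simp
      _ = K := mul_one K
  · calc K = k s₀ t₀ * (1 : C(Y, ℝ)) t₀ := by simp [hK]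
      _ ≤ A 1 s₀ := (hA 1 s₀).2 ⟨t₀, ht₀, rfl⟩
      _ ≤ ‖A 1‖ := (le_abs_self _).trans ((A 1).norm_coe_le_norm s₀)

end MaxKernel

section RatioSup

variable {E F : Type*} [NormedAddCommGroup E] [NormedAddCommGroup F] {Z : Set E} {A : E → F}
  {K : ℝ} {x₀ : E}

theorem csSup_norm_sub_div_norm_sub_eq (hLip : ∀ x y, ‖A x - A y‖ ≤ K * ‖x - y‖)
    (hZ : 0 ∈ Z) (hA0 : A 0 = 0) (hx₀Z : x₀ ∈ Z) (hx₀ : x₀ ≠ 0)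
    (hAx₀ : ‖A x₀‖ = K * ‖x₀‖) :
    sSup {r : ℝ | ∃ x y, x ∈ Z ∧ y ∈ Z ∧ x ≠ y ∧ r = ‖A x - A y‖ / ‖x - y‖} = K := by
  refine IsGreatest.csSup_eq ⟨⟨x₀, 0, hx₀Z, hZ, hx₀, ?_⟩, ?_⟩
  · rw [hA0, sub_zero, sub_zero, hAx₀, mul_div_cancel_right₀ _ (norm_ne_zero_iff.2 hx₀)]
  · rintro r ⟨x, y, -, -, hxy, rfl⟩
    exact (div_le_iff₀ (norm_pos_iff.2 (sub_ne_zero.2 hxy))).2 (hLip x y)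

theorem csSup_norm_div_norm_eq (hLip : ∀ x y, ‖A x - A y‖ ≤ K * ‖x - y‖) (hA0 : A 0 = 0)
    (hx₀Z : x₀ ∈ Z) (hx₀ : x₀ ≠ 0) (hAx₀ : ‖A x₀‖ = K * ‖x₀‖) :
    sSup {r : ℝ | ∃ x, x ∈ Z ∧ x ≠ 0 ∧ r = ‖A x‖ / ‖x‖} = K := by
  have hbound (x : E) : ‖A x‖ ≤ K * ‖x‖ := by simpa [hA0] using hLip x 0
  refine IsGreatest.csSup_eq ⟨⟨x₀, hx₀Z, hx₀, ?_⟩, ?_⟩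
  · rw [hAx₀, mul_div_cancel_right₀ _ (norm_ne_zero_iff.2 hx₀)]
  · rintro r ⟨x, -, hx, rfl⟩
    exact (div_le_iff₀ (norm_pos_iff.2 hx)).2 (hbound x)

end RatioSup

theorem maxKernelOperator_lipschitz_seminorm_eq_norm_eq_max_kernel_general
    {a : ℝ} (ha : 0 < a)
    (α β : C(Set.Icc (0:ℝ) a, Set.Icc (0:ℝ) a))
    (S : Set (Set.Icc (0:ℝ) a × Set.Icc (0:ℝ) a))
    (hS : S = {p | p.2 ∈ Set.Icc (α p.1) (β p.1)})
    (k : Set.Icc (0:ℝ) a → Set.Icc (0:ℝ) a → ℝ)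
    (hk_cont : ContinuousOn (fun p : Set.Icc (0:ℝ) a × Set.Icc (0:ℝ) a => k p.1 p.2) S)
    (hk_nonneg : ∀ p ∈ S, 0 ≤ k p.1 p.2)
    -- the max-type kernel operator `A : C[0,a] → C[0,a]`
    (A : C(Set.Icc (0:ℝ) a, ℝ) → C(Set.Icc (0:ℝ) a, ℝ))
    (hA : ∀ φ s, IsGreatest ((fun t => k s t * φ t) '' Set.Icc (α s) (β s)) (A φ s)) :
    ∃ K : ℝ,
      -- `K = max {k(s,t) : (s,t) ∈ S}`
      IsGreatest ((fun p : Set.Icc (0:ℝ) a × Set.Icc (0:ℝ) a => k p.1 p.2) '' S) K ∧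
      -- `‖A‖_LIP = K`
      sSup {r : ℝ | ∃ φ ψ : C(Set.Icc (0:ℝ) a, ℝ), (∀ s, 0 ≤ φ s) ∧ (∀ s, 0 ≤ ψ s) ∧
        φ ≠ ψ ∧ r = ‖A φ - A ψ‖ / ‖φ - ψ‖} = K ∧
      -- `‖A‖ = K`
      sSup {r : ℝ | ∃ φ : C(Set.Icc (0:ℝ) a, ℝ), (∀ s, 0 ≤ φ s) ∧ φ ≠ 0 ∧
        r = ‖A φ‖ / ‖φ‖} = K := by
  have : Nonempty (Icc (0:ℝ) a) := ⟨⟨0, left_mem_Icc.2 ha.le⟩⟩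
  subst hS
  have hScompact := (isClosed_setOf_snd_mem_Icc α.continuous β.continuous).isCompact
  obtain ⟨t, ht, -⟩ := (hA 0 (Classical.arbitrary _)).1
  obtain ⟨K, hK⟩ := (hScompact.image_of_continuousOn hk_cont).exists_isGreatest
    (Set.Nonempty.image _ ⟨(_, t), ht⟩)
  obtain ⟨⟨s₀, t₀⟩, ht₀, hK₀⟩ := hK.1
  have hk : ∀ s, ∀ t ∈ Icc (α s) (β s), 0 ≤ k s t ∧ k s t ≤ K := fun s t ht =>
    ⟨hk_nonneg (s, t) ht, hK.2 ⟨(s, t), ht, rfl⟩⟩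
  have hLip := norm_maxKernel_sub_le hA hk
  have hA1 : ‖A 1‖ = K * ‖(1 : C(Icc (0:ℝ) a, ℝ))‖ := by
    rw [norm_one, mul_one, norm_maxKernel_one hA hk ht₀ hK₀]
  have hone_mem : (1 : C(Icc (0:ℝ) a, ℝ)) ∈ {φ | ∀ s, 0 ≤ φ s} := fun _ => zero_le_one
  have hA0 := maxKernel_zero hA
  exact ⟨K, hK,
    csSup_norm_sub_div_norm_sub_eq hLip (fun _ => le_rfl) hA0 hone_mem one_ne_zero hA1,
    csSup_norm_div_norm_eq hLip hA0 hone_mem one_ne_zero hA1⟩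

/-- For the max-type kernel operator `A` restricted to the cone `Z = C₊[0,a]`,
`‖A‖_LIP = ‖A‖ = max {k(s,t) : (s,t) ∈ S}`, where
`‖A‖ = sup {‖Aφ‖_∞/‖φ‖_∞ : φ ∈ Z, φ ≠ 0}` and
`‖A‖_LIP = sup {‖Aφ - Aψ‖_∞/‖φ - ψ‖_∞ : φ, ψ ∈ Z, φ ≠ ψ}`. -/
theorem maxKernelOperator_lipschitz_seminorm_eq_norm_eq_max_kernel
    {a : ℝ} (ha : 0 < a)
    (α β : C(Set.Icc (0:ℝ) a, Set.Icc (0:ℝ) a))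
    (hαβ : ∀ s, α s ≤ β s)
    (S : Set (Set.Icc (0:ℝ) a × Set.Icc (0:ℝ) a))
    (hS : S = {p | p.2 ∈ Set.Icc (α p.1) (β p.1)})
    (k : Set.Icc (0:ℝ) a → Set.Icc (0:ℝ) a → ℝ)
    (hk_cont : ContinuousOn (fun p : Set.Icc (0:ℝ) a × Set.Icc (0:ℝ) a => k p.1 p.2) S)
    (hk_nonneg : ∀ p ∈ S, 0 ≤ k p.1 p.2)
    -- the max-type kernel operator `A : C[0,a] → C[0,a]`
    (A : C(Set.Icc (0:ℝ) a, ℝ) → C(Set.Icc (0:ℝ) a, ℝ))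
    (hA : ∀ φ s, IsGreatest ((fun t => k s t * φ t) '' Set.Icc (α s) (β s)) (A φ s)) :
    ∃ K : ℝ,
      -- `K = max {k(s,t) : (s,t) ∈ S}`
      IsGreatest ((fun p : Set.Icc (0:ℝ) a × Set.Icc (0:ℝ) a => k p.1 p.2) '' S) K ∧
      -- `‖A‖_LIP = K`
      sSup {r : ℝ | ∃ φ ψ : C(Set.Icc (0:ℝ) a, ℝ), (∀ s, 0 ≤ φ s) ∧ (∀ s, 0 ≤ ψ s) ∧
        φ ≠ ψ ∧ r = ‖A φ - A ψ‖ / ‖φ - ψ‖} = K ∧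
      -- `‖A‖ = K`
      sSup {r : ℝ | ∃ φ : C(Set.Icc (0:ℝ) a, ℝ), (∀ s, 0 ≤ φ s) ∧ φ ≠ 0 ∧
        r = ‖A φ‖ / ‖φ‖} = K :=
  maxKernelOperator_lipschitz_seminorm_eq_norm_eq_max_kernel_general ha α β S hS k hk_cont hk_nonneg
    A hA
end

section
/- For the sup-kernel operator A restricted to the cone Z = Y₊ of nonnegative bounded functions on M, one has ‖A‖_LIP = ‖A‖ = sup{k(s,t) : s, t ∈ M}, where ‖A‖ = sup{‖Af‖_∞/‖f‖_∞ : f ∈ Z, f ≠ 0} and ‖A‖_LIP = sup{‖Af − Ag‖_∞/‖f − g‖_∞ : f, g ∈ Z, f ≠ g}. -/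
/-- A real function on `M` is bounded. -/
def IsBddFun {M : Type*} (f : M → ℝ) : Prop := ∃ c : ℝ, ∀ t, |f t| ≤ c

/-- The sup-kernel operator `(Af)(s) = sup {k(s,t) f(t) : t ∈ M}`. -/
noncomputable def supKernelOp {M : Type*} (k : M → M → ℝ) (f : M → ℝ) : M → ℝ :=
  fun s => ⨆ t, k s t * f t

/-- The supremum norm `‖f‖_∞ = sup {|f(t)| : t ∈ M}`. -/
noncomputable def supNorm {M : Type*} (f : M → ℝ) : ℝ := ⨆ t, |f t|

/-! Write `κ = sup k`. Since `k ≥ 0`, each term satisfies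
`k s t f(t) ≤ k s t g(t) + κ ‖f - g‖_∞`, so `Af ≤ Ag + κ ‖f - g‖_∞` pointwise and `A` is
`κ`-Lipschitz for the sup norm on all bounded functions. As `A0 = 0`, the norm ratio is the
Lipschitz ratio against `g = 0`, and both bounds are attained at `f = 1`, where
`‖A1‖_∞ = sup_s sup_t k(s,t) = κ`. -/

open Set

section

variable {M : Type*} {k : M → M → ℝ}

lemma IsBddFun.bddAbove_range_abs {f : M → ℝ} (hf : IsBddFun f) :
    BddAbove (range fun t => |f t|) :=
  let ⟨c, hc⟩ := hf
  ⟨c, forall_mem_range.2 hc⟩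

lemma IsBddFun.sub {f g : M → ℝ} (hf : IsBddFun f) (hg : IsBddFun g) : IsBddFun (f - g) :=
  let ⟨c, hc⟩ := hf
  let ⟨d, hd⟩ := hg
  ⟨c + d, fun t => (abs_sub (f t) (g t)).trans (add_le_add (hc t) (hd t))⟩

lemma isBddFun_zero : IsBddFun (0 : M → ℝ) := ⟨0, fun _ => by simp⟩

lemma isBddFun_one : IsBddFun (1 : M → ℝ) := ⟨1, fun _ => by simp⟩

lemma abs_le_supNorm {f : M → ℝ} (hf : IsBddFun f) (t : M) : |f t| ≤ supNorm f :=
  le_ciSup hf.bddAbove_range_abs t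

lemma supNorm_nonneg (f : M → ℝ) : 0 ≤ supNorm f :=
  Real.iSup_nonneg fun t => abs_nonneg (f t)

lemma supNorm_sub_comm (f g : M → ℝ) : supNorm (f - g) = supNorm (g - f) := by
  simp only [supNorm, Pi.sub_apply, abs_sub_comm]

lemma supNorm_one [Nonempty M] : supNorm (1 : M → ℝ) = 1 := by
  simp [supNorm]

lemma supKernelOp_zero : supKernelOp k 0 = 0 := by
  funext s
  simp [supKernelOp]

lemma le_iSup_kernel (hk : BddAbove (range fun p : M × M => k p.1 p.2)) (s t : M) :
    k s t ≤ ⨆ p : M × M, k p.1 p.2 :=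
  le_ciSup hk (s, t)

lemma bddAbove_range_kernel_mul (hk₀ : ∀ s t, 0 ≤ k s t)
    (hk : BddAbove (range fun p : M × M => k p.1 p.2))
    {f : M → ℝ} (hf : IsBddFun f) (s : M) :
    BddAbove (range fun t => k s t * f t) := by
  obtain ⟨c, hc⟩ := hf
  refine ⟨(⨆ p : M × M, k p.1 p.2) * c, forall_mem_range.2 fun t => ?_⟩
  calc k s t * f t ≤ k s t * c :=
        mul_le_mul_of_nonneg_left ((le_abs_self _).trans (hc t)) (hk₀ s t)
    _ ≤ (⨆ p : M × M, k p.1 p.2) * c :=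
      mul_le_mul_of_nonneg_right (le_iSup_kernel hk s t) ((abs_nonneg _).trans (hc t))

lemma supKernelOp_le_add [Nonempty M] (hk₀ : ∀ s t, 0 ≤ k s t)
    (hk : BddAbove (range fun p : M × M => k p.1 p.2))
    {f g : M → ℝ} (hf : IsBddFun f) (hg : IsBddFun g) (s : M) :
    supKernelOp k f s ≤ supKernelOp k g s + (⨆ p : M × M, k p.1 p.2) * supNorm (f - g) := by
  refine ciSup_le fun t => ?_
  have hκ : 0 ≤ ⨆ p : M × M, k p.1 p.2 := (hk₀ s t).trans (le_iSup_kernel hk s t)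
  have hdiff : k s t * (f t - g t) ≤ (⨆ p : M × M, k p.1 p.2) * supNorm (f - g) :=
    calc k s t * (f t - g t) ≤ k s t * |(f - g) t| :=
          mul_le_mul_of_nonneg_left (le_abs_self _) (hk₀ s t)
      _ ≤ (⨆ p : M × M, k p.1 p.2) * |(f - g) t| :=
          mul_le_mul_of_nonneg_right (le_iSup_kernel hk s t) (abs_nonneg _)
      _ ≤ (⨆ p : M × M, k p.1 p.2) * supNorm (f - g) :=
          mul_le_mul_of_nonneg_left (abs_le_supNorm (hf.sub hg) t) hκ
  calc k s t * f t = k s t * g t + k s t * (f t - g t) := by ring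
    _ ≤ supKernelOp k g s + (⨆ p : M × M, k p.1 p.2) * supNorm (f - g) :=
      add_le_add (le_ciSup (bddAbove_range_kernel_mul hk₀ hk hg s) t) hdiff

lemma supNorm_supKernelOp_sub_le [Nonempty M] (hk₀ : ∀ s t, 0 ≤ k s t)
    (hk : BddAbove (range fun p : M × M => k p.1 p.2))
    {f g : M → ℝ} (hf : IsBddFun f) (hg : IsBddFun g) :
    supNorm (supKernelOp k f - supKernelOp k g) ≤
      (⨆ p : M × M, k p.1 p.2) * supNorm (f - g) := by
  refine ciSup_le fun s => abs_sub_le_iff.2 ⟨?_, ?_⟩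
  · linarith [supKernelOp_le_add hk₀ hk hf hg s]
  · have := supKernelOp_le_add hk₀ hk hg hf s
    rw [← supNorm_sub_comm] at this
    linarith

lemma supNorm_supKernelOp_sub_div_le [Nonempty M] (hk₀ : ∀ s t, 0 ≤ k s t)
    (hk : BddAbove (range fun p : M × M => k p.1 p.2))
    {f g : M → ℝ} (hf : IsBddFun f) (hg : IsBddFun g) :
    supNorm (supKernelOp k f - supKernelOp k g) / supNorm (f - g) ≤ ⨆ p : M × M, k p.1 p.2 :=
  div_le_of_le_mul₀ (supNorm_nonneg _) (Real.iSup_nonneg fun p => hk₀ p.1 p.2)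
    (supNorm_supKernelOp_sub_le hk₀ hk hf hg)

lemma supNorm_supKernelOp_div_le [Nonempty M] (hk₀ : ∀ s t, 0 ≤ k s t)
    (hk : BddAbove (range fun p : M × M => k p.1 p.2))
    {f : M → ℝ} (hf : IsBddFun f) :
    supNorm (supKernelOp k f) / supNorm f ≤ ⨆ p : M × M, k p.1 p.2 := by
  simpa [supKernelOp_zero] using supNorm_supKernelOp_sub_div_le hk₀ hk hf isBddFun_zero

lemma supNorm_supKernelOp_one (hk₀ : ∀ s t, 0 ≤ k s t)
    (hk : BddAbove (range fun p : M × M => k p.1 p.2)) :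
    supNorm (supKernelOp k 1) = ⨆ p : M × M, k p.1 p.2 := by
  have hrow : ∀ s, 0 ≤ ⨆ t, k s t := fun s => Real.iSup_nonneg (hk₀ s)
  simp only [supNorm, supKernelOp, Pi.one_apply, mul_one, abs_of_nonneg (hrow _)]
  exact (ciSup_prod hk).symm

end

/-- For the sup-kernel operator `A` restricted to the cone `Z = Y₊` of nonnegative
bounded real functions on `M`, one has `‖A‖_LIP = ‖A‖ = sup {k(s,t) : s, t ∈ M}`, where
`‖A‖ = sup {‖Af‖_∞/‖f‖_∞ : f ∈ Z, f ≠ 0}` and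
`‖A‖_LIP = sup {‖Af - Ag‖_∞/‖f - g‖_∞ : f, g ∈ Z, f ≠ g}`. -/
theorem supKernelOp_lipschitz_seminorm_eq_norm_eq_sup_kernel
    {M : Type*} [Nonempty M]
    (k : M → M → ℝ)
    (hk_nonneg : ∀ s t, 0 ≤ k s t)
    (hk_bdd : ∃ K : ℝ, ∀ s t, k s t ≤ K) :
    sSup {r : ℝ | ∃ f g : M → ℝ, IsBddFun f ∧ (∀ t, 0 ≤ f t) ∧ IsBddFun g ∧ (∀ t, 0 ≤ g t) ∧
        f ≠ g ∧ r = supNorm (supKernelOp k f - supKernelOp k g) / supNorm (f - g)} =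
      (⨆ p : M × M, k p.1 p.2) ∧
    sSup {r : ℝ | ∃ f : M → ℝ, IsBddFun f ∧ (∀ t, 0 ≤ f t) ∧ f ≠ 0 ∧
        r = supNorm (supKernelOp k f) / supNorm f} =
      (⨆ p : M × M, k p.1 p.2) := by
  obtain ⟨K, hK⟩ := hk_bdd
  have hk : BddAbove (range fun p : M × M => k p.1 p.2) :=
    ⟨K, forall_mem_range.2 fun p => hK p.1 p.2⟩
  have hA1 : supNorm (supKernelOp k 1) / supNorm (1 : M → ℝ) = ⨆ p : M × M, k p.1 p.2 := by
    rw [supNorm_one, div_one, supNorm_supKernelOp_one hk_nonneg hk]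
  have h1 : (0 : M → ℝ) ≤ 1 := zero_le_one
  constructor
  · refine IsGreatest.csSup_eq
      ⟨⟨1, 0, isBddFun_one, h1, isBddFun_zero, fun _ => le_rfl, one_ne_zero, ?_⟩, ?_⟩
    · simpa [supKernelOp_zero] using hA1.symm
    · rintro _ ⟨f, g, hf, -, hg, -, -, rfl⟩
      exact supNorm_supKernelOp_sub_div_le hk_nonneg hk hf hg
  · refine IsGreatest.csSup_eq ⟨⟨1, isBddFun_one, h1, one_ne_zero, hA1.symm⟩, ?_⟩
    rintro _ ⟨f, hf, -, -, rfl⟩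
    exact supNorm_supKernelOp_div_le hk_nonneg hk hf
end
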